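/- Let (N, K, v) be an incomplete cooperative game with K intersection-closed, N ∈ K, and Δ_v(S) ≥ 0 for every S ∈ K. Then the game v_δ defined through its dividends by d_{v_δ}(T) = Δ_v(c_K(T)) / |C(T)| for every nonempty T ⊆ N is a P-extension of (N, K, v). -/
import Mathlib


open Finset

variable {α : Type*} [Fintype α] [DecidableEq α]

/-- A set system is intersection-closed if it is closed under pairwise intersections. -/
def InterClosed (K : Finset (Finset α)) : Prop :=
  ∀ S ∈ K, ∀ T ∈ K, S ∩ T ∈ K

/-- The closure `c_K(T) = ⋂ {S ∈ K : T ⊆ S}` of a coalition `T` in the set system `K`. -/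
def cl (K : Finset (Finset α)) (T : Finset α) : Finset α :=
  (K.filter fun S => T ⊆ S).inf id

/-- The family `C(T)` of coalitions indistinguishable from `T`. -/
def classOf (K : Finset (Finset α)) (T : Finset α) : Finset (Finset α) :=
  Finset.univ.filter fun X => cl K X = cl K T

/-- The Harsanyi dividend `d_w(S) = w S - ∑_{T ⊊ S} d_w(T)`. -/
noncomputable def dividend (w : Finset α → ℝ) (S : Finset α) : ℝ :=
  w S - ∑ T ∈ (S.powerset.erase S).attach, dividend w T.1
termination_by S.card
decreasing_by
  have h := T.2
  simp only [mem_erase, mem_powerset] at h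
  exact Finset.card_lt_card (h.2.ssubset_of_ne h.1)

/-- The surplus `Δ_v(S) = v S - ∑_{T ∈ K, T ⊊ S} Δ_v(T)` for `S ∈ K`. -/
noncomputable def Delta (K : Finset (Finset α)) (v : Finset α → ℝ) (S : Finset α) : ℝ :=
  v S - ∑ T ∈ (K.filter fun T => T ⊂ S).attach, Delta K v T.1
termination_by S.card
decreasing_by
  have h := T.2
  simp only [mem_filter] at h
  exact Finset.card_lt_card h.2

/-- A δ-system for the incomplete game `(N, K, v)`. -/
def IsDeltaSystem (K : Finset (Finset α)) (v δ : Finset α → ℝ) : Prop :=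
  (∀ S ∈ K, ∑ T ∈ S.powerset, δ T = v S) ∧
  ∀ S T : Finset α, cl K S = cl K T → δ S = δ T

/-- The payoff `Φ_i = ∑_{S ∋ i} δ(S)/|S|` computed from a dividend function `δ`. -/
noncomputable def UDofDelta (δ : Finset α → ℝ) (i : α) : ℝ :=
  ∑ S ∈ Finset.univ.filter (fun S => i ∈ S), δ S / S.card

/-- The complete game whose Harsanyi dividends are `δ`. -/
def gameOf (δ : Finset α → ℝ) (S : Finset α) : ℝ := ∑ T ∈ S.powerset, δ T

/-- A P-extension: a positive cooperative game agreeing with `v` on `K`. -/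
def PExtension (K : Finset (Finset α)) (v w : Finset α → ℝ) : Prop :=
  w ∅ = 0 ∧ (∀ S, 0 ≤ dividend w S) ∧ ∀ S ∈ K, w S = v S

/-- P-extendability of an incomplete game. -/
def PExtendable (K : Finset (Finset α)) (v : Finset α → ℝ) : Prop :=
  ∃ w, PExtension K v w

/-- The Shapley value `φ_i(w) = ∑_{S ∋ i} d_w(S)/|S|`. -/
noncomputable def shapley (w : Finset α → ℝ) (i : α) : ℝ :=
  ∑ S ∈ Finset.univ.filter (fun S => i ∈ S), dividend w S / S.card


lemma inf_mem_of_interClosed (K : Finset (Finset α))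
    (hIC : InterClosed K)
    (hN : (univ : Finset α) ∈ K) (s : Finset (Finset α)) (hs : s ⊆ K) :
    s.inf id ∈ K := by
  induction s using Finset.induction_on with
  | empty => simpa using hN
  | @insert a t ha ih =>
      rw [Finset.inf_insert]
      exact hIC a (hs (mem_insert_self a t)) _ (ih fun x hx => hs (mem_insert_of_mem hx))

lemma cl_mem (K : Finset (Finset α)) (hIC : InterClosed K)
    (hN : (univ : Finset α) ∈ K) (T : Finset α) : cl K T ∈ K :=
  inf_mem_of_interClosed K hIC hN _ (filter_subset _ _)

lemma subset_cl (K : Finset (Finset α)) (T : Finset α) : T ⊆ cl K T :=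
  Finset.le_iff_subset.mp (Finset.le_inf fun _ hS => Finset.le_iff_subset.mpr (mem_filter.mp hS).2)

lemma cl_subset (K : Finset (Finset α)) {S T : Finset α} (hS : S ∈ K) (hTS : T ⊆ S) :
    cl K T ⊆ S :=
  Finset.le_iff_subset.mp (Finset.inf_le (mem_filter.mpr ⟨hS, hTS⟩))

lemma cl_eq_self (K : Finset (Finset α)) {S : Finset α} (hS : S ∈ K) : cl K S = S :=
  subset_antisymm (cl_subset K hS Subset.rfl) (subset_cl K S)

lemma dividend_gameOf (δ : Finset α → ℝ) (S : Finset α) :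
    dividend (gameOf δ) S = δ S := by
  induction S using Finset.strongInduction with
  | _ S ih =>
    rw [dividend, Finset.sum_attach _ (fun T => dividend (gameOf δ) T)]
    have hsum : ∑ T ∈ S.powerset.erase S, dividend (gameOf δ) T
         = ∑ T ∈ S.powerset.erase S, δ T := by
      refine Finset.sum_congr rfl fun T hT => ?_
      simp only [mem_erase, mem_powerset] at hT
      exact ih T (hT.2.ssubset_of_ne hT.1)
    rw [hsum, gameOf, ← Finset.sum_erase_add _ _ (mem_powerset_self S)]
    ring

lemma delta_sum (K : Finset (Finset α)) (v : Finset α → ℝ) {S : Finset α} (hS : S ∈ K) :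
    ∑ R ∈ K.filter (· ⊆ S), Delta K v R = v S := by
  have hins : K.filter (· ⊆ S) = insert S (K.filter (· ⊂ S)) := by
    ext R
    simp only [mem_filter, mem_insert]
    constructor
    · rintro ⟨hR, hRS⟩
      rcases eq_or_ne R S with h | h
      · exact Or.inl h
      · exact Or.inr ⟨hR, hRS.ssubset_of_ne h⟩
    · rintro (rfl | ⟨hR, hRS⟩)
      · exact ⟨hS, Subset.rfl⟩
      · exact ⟨hR, hRS.subset⟩
  rw [hins, Finset.sum_insert (by simp only [mem_filter, not_and]; exact fun _ h => (h.ne rfl).elim), Delta, Finset.sum_attach _ (Delta K v)]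
  ring

/-- if `Δ_v(S) ≥ 0` on `K`, the game `v_δ` with dividends
`d(T) = Δ_v(c_K(T)) / |C(T)|` for nonempty `T` is a P-extension of `(N, K, v)`. -/
theorem vdelta_is_pExtension (K : Finset (Finset α))
    (hIC : InterClosed K) (hempty : ∅ ∈ K) (hN : (Finset.univ : Finset α) ∈ K)
    (v : Finset α → ℝ) (hv : v ∅ = 0) (hΔ : ∀ S ∈ K, 0 ≤ Delta K v S) :
    ∃ w : Finset α → ℝ, w ∅ = 0 ∧
      (∀ T : Finset α, T ≠ ∅ →
        dividend w T = Delta K v (cl K T) / ((classOf K T).card : ℝ)) ∧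
      PExtension K v w := by
  classical
  set δ : Finset α → ℝ := fun T => Delta K v (cl K T) / ((classOf K T).card : ℝ) with hδ
  have hδempty : δ ∅ = 0 := by
    have h1 : cl K (∅ : Finset α) = ∅ := cl_eq_self K hempty
    have h2 : Delta K v (∅ : Finset α) = 0 := by
      rw [Delta]
      have : (K.filter fun T => T ⊂ (∅ : Finset α)) = ∅ := by
        refine filter_eq_empty_iff.mpr fun T _ hT => ?_
        exact absurd hT.subset (by simp [hT.ne])
      rw [this, hv]
      simp
    simp [hδ, h1, h2]
  have hagree : ∀ S ∈ K, gameOf δ S = v S := by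
    intro S hS
    have hmaps : ∀ T ∈ S.powerset, cl K T ∈ K.filter (· ⊆ S) := fun T hT =>
      mem_filter.mpr ⟨cl_mem K hIC hN T, cl_subset K hS (mem_powerset.mp hT)⟩
    rw [gameOf, ← Finset.sum_fiberwise_of_maps_to hmaps δ]
    have hfib : ∀ R ∈ K.filter (· ⊆ S),
        ∑ T ∈ S.powerset.filter (fun T => cl K T = R), δ T = Delta K v R := by
      intro R hR
      obtain ⟨hRK, hRS⟩ := mem_filter.mp hR
      have hclass : S.powerset.filter (fun T => cl K T = R) = classOf K R := by
        ext T
        simp only [mem_filter, mem_powerset, classOf, mem_univ, true_and,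
          cl_eq_self K hRK]
        constructor
        · exact fun h => h.2
        · intro h
          exact ⟨(subset_cl K T).trans (h ▸ hRS), h⟩
      rw [hclass]
      have hconst : ∀ T ∈ classOf K R, δ T = Delta K v R / ((classOf K R).card : ℝ) := by
        intro T hT
        have h1 : cl K T = R := by
          simpa [classOf, cl_eq_self K hRK] using hT
        have h2 : classOf K T = classOf K R := by
          unfold classOf
          rw [h1, cl_eq_self K hRK]
        simp [hδ, h1, h2]
      rw [Finset.sum_congr rfl hconst, Finset.sum_const, nsmul_eq_mul]
      have hcard : ((classOf K R).card : ℝ) ≠ 0 := by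
        have hmem : R ∈ classOf K R := by simp [classOf]
        exact_mod_cast (Finset.card_pos.mpr ⟨R, hmem⟩).ne'
      field_simp
    rw [Finset.sum_congr rfl hfib, delta_sum K v hS]
  refine ⟨gameOf δ, ?_, ?_, ?_, ?_, ?_⟩
  · simp [gameOf, hδempty]
  · intro T _
    rw [dividend_gameOf]
  · simp [gameOf, hδempty]
  · intro S
    rw [dividend_gameOf]
    exact div_nonneg (hΔ _ (cl_mem K hIC hN S)) (by positivity)
  · exact hagree
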